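/- arXiv:1007.1693 — 3 statements merged into one kernel-verified Lean document; each statement's English description precedes it below -/
import Mathlib

section
/- For homotopy of Gauss words (α = {a}, τ = id, S = {(a,a,a)}), the group G_3 is isomorphic to Z; that is, in the group generated by Gauss words modulo the four types of relations with truncation parameter 3, the generators ABAB, ABACBC, ABCABC, ABCACB, ABCBAC, ABCBCA are all zero. -/
attribute [local instance] Classical.propDecidable

/-!
Gauss words are modelled as lists of letters (natural numbers) in which every
letter appearing does so exactly twice.  Subwords are obtained by restriction to a
subset of the letters; isomorphism is a bijective renaming of letters.
-/

def lettersOf (w : List ℕ) : Finset ℕ := w.toFinset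

def rank (w : List ℕ) : ℕ := (lettersOf w).card

def IsGauss (w : List ℕ) : Prop := ∀ x ∈ w, w.count x = 2

/-- The subword of `w` consisting of the letters in `T`. -/
def restrict (w : List ℕ) (T : Finset ℕ) : List ℕ := w.filter (fun x => decide (x ∈ T))

/-- Isomorphism of Gauss words: a bijective renaming of letters. -/
def Iso (v w : List ℕ) : Prop := ∃ σ : ℕ ≃ ℕ, v.map σ = w

/-- The number of subwords of `w` isomorphic to `q`. -/
noncomputable def bracketN (q w : List ℕ) : ℕ :=
  ((lettersOf w).powerset.filter (fun T => Iso (restrict w T) q)).card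

/-- The homotopy moves H1, H2, H3 on Gauss words. -/
inductive HMove : List ℕ → List ℕ → Prop
  | h1 (x y : List ℕ) (A : ℕ) : HMove (x ++ [A, A] ++ y) (x ++ y)
  | h2 (x y z : List ℕ) (A B : ℕ) :
      HMove (x ++ [A, B] ++ y ++ [B, A] ++ z) (x ++ y ++ z)
  | h3 (x y z t : List ℕ) (A B C : ℕ) :
      HMove (x ++ [A, B] ++ y ++ [A, C] ++ z ++ [B, C] ++ t)
            (x ++ [B, A] ++ y ++ [C, A] ++ z ++ [C, B] ++ t)

/-- Homotopy of Gauss words: generated by isomorphism and the moves H1, H2, H3. -/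
def Homotopic : List ℕ → List ℕ → Prop :=
  Relation.EqvGen (fun v w => HMove v w ∨ Iso v w)

-- The six rank-4 Gauss words (letters A,B,C,D as 0,1,2,3).

/-- The generators of the groups `G_n` for Gauss words. -/
def GWgen := {w : List ℕ // IsGauss w}

open FreeAbelianGroup in
/-- The relations defining `G_n` for homotopy of Gauss words: identification of
isomorphic Gauss words, `xAAy = 0`, `xAByBAz + xAyAz + xByBz = 0`, the
H3-relation, and `w = 0` for every Gauss word of rank `> n`. -/
def relSet (n : ℕ) : Set (FreeAbelianGroup GWgen) :=
  {g | ∃ p q : GWgen, Iso p.1 q.1 ∧ g = of p - of q} ∪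
  {g | ∃ (p : GWgen) (x y : List ℕ) (A : ℕ),
        p.1 = x ++ [A, A] ++ y ∧ g = of p} ∪
  {g | ∃ (p q q' : GWgen) (x y z : List ℕ) (A B : ℕ),
        p.1 = x ++ [A, B] ++ y ++ [B, A] ++ z ∧
        q.1 = x ++ [A] ++ y ++ [A] ++ z ∧
        q'.1 = x ++ [B] ++ y ++ [B] ++ z ∧
        g = of p + of q + of q'} ∪
  {g | ∃ (p1 p2 p3 p4 q1 q2 q3 q4 : GWgen) (x y z t : List ℕ) (A B C : ℕ),
        p1.1 = x ++ [A,B] ++ y ++ [A,C] ++ z ++ [B,C] ++ t ∧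
        p2.1 = x ++ [A,B] ++ y ++ [A] ++ z ++ [B] ++ t ∧
        p3.1 = x ++ [A] ++ y ++ [A,C] ++ z ++ [C] ++ t ∧
        p4.1 = x ++ [B] ++ y ++ [C] ++ z ++ [B,C] ++ t ∧
        q1.1 = x ++ [B,A] ++ y ++ [C,A] ++ z ++ [C,B] ++ t ∧
        q2.1 = x ++ [B,A] ++ y ++ [A] ++ z ++ [B] ++ t ∧
        q3.1 = x ++ [A] ++ y ++ [C,A] ++ z ++ [C] ++ t ∧
        q4.1 = x ++ [B] ++ y ++ [C] ++ z ++ [C,B] ++ t ∧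
        g = of p1 + of p2 + of p3 + of p4 - of q1 - of q2 - of q3 - of q4} ∪
  {g | ∃ p : GWgen, n < rank p.1 ∧ g = of p}

/-- The group `G_n` for homotopy of Gauss words. -/
abbrev Gn (n : ℕ) := FreeAbelianGroup GWgen ⧸ AddSubgroup.closure (relSet n)

/-- The class of a Gauss word in `G_n`. -/
def cls (n : ℕ) (p : GWgen) : Gn n :=
  QuotientAddGroup.mk (FreeAbelianGroup.of p)

/-!
A Gauss word of rank at most 3 either contains a doubled letter `AA`, and so vanishes, or is,
after renaming its letters in order of first occurrence, the empty word or one of `ABAB`,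
`ABACBC`, `ABCABC`, `ABCACB`, `ABCBAC`, `ABCBCA`. Instances of the H2- and H3-relations in which
the remaining words have rank 4, or contain a doubled letter, give enough linear relations among
these six classes to kill all of them. Hence `G_3` is generated by the empty word, and the
coefficient of the empty word, which vanishes on every relation, identifies `G_3` with `ℤ`.
-/

-- Otherwise `Classical.propDecidable` takes precedence over the instances `decide` evaluates.
attribute [-instance] Classical.propDecidable

instance : DecidablePred IsGauss := fun w => inferInstanceAs (Decidable (∀ x ∈ w, w.count x = 2))

open FreeAbelianGroup

lemma List.Nodup.exists_equiv_map_eq_range {l : List ℕ} (hl : l.Nodup) :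
    ∃ σ : ℕ ≃ ℕ, l.map σ = List.range l.length := by
  induction l using List.reverseRecOn with
  | nil => exact ⟨Equiv.refl ℕ, rfl⟩
  | append_singleton l a ih =>
    obtain ⟨hl, ha⟩ : l.Nodup ∧ a ∉ l := by
      simp only [List.nodup_append, List.mem_singleton] at hl
      exact ⟨hl.1, fun h => hl.2.2 a h a rfl rfl⟩
    obtain ⟨σ, hσ⟩ := ih hl
    have hσa : l.length ≤ σ a := by
      by_contra! h
      rw [← List.mem_range, ← hσ, List.mem_map_of_injective σ.injective] at h
      exact ha h
    have hfix : ∀ i ∈ List.range l.length, Equiv.swap (σ a) l.length i = i := fun i hi =>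
      Equiv.swap_apply_of_ne_of_ne (by grind) (by grind)
    refine ⟨σ.trans (Equiv.swap (σ a) l.length), ?_⟩
    rw [Equiv.coe_trans, ← List.map_map, List.map_append, hσ, List.map_append,
      List.map_congr_left hfix]
    simp [List.range_succ]

/-- The letters of `w` in order of first occurrence (`List.dedup` keeps last occurrences). -/
def firstOccurrences (w : List ℕ) : List ℕ := w.reverse.dedup.reverse

def normalForm (w : List ℕ) : List ℕ := w.map (firstOccurrences w).idxOf

lemma nodup_firstOccurrences (w : List ℕ) : (firstOccurrences w).Nodup :=
  List.nodup_reverse.2 (List.nodup_dedup _)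

lemma mem_firstOccurrences {w : List ℕ} {a : ℕ} : a ∈ firstOccurrences w ↔ a ∈ w := by
  simp [firstOccurrences]

lemma length_firstOccurrences (w : List ℕ) : (firstOccurrences w).length = rank w := by
  simp [firstOccurrences, rank, lettersOf, ← List.card_toFinset]

lemma exists_equiv_map_eq_normalForm (w : List ℕ) : ∃ σ : ℕ ≃ ℕ, w.map σ = normalForm w := by
  obtain ⟨σ, hσ⟩ := (nodup_firstOccurrences w).exists_equiv_map_eq_range
  set l := firstOccurrences w
  refine ⟨σ, List.map_congr_left fun a ha => ?_⟩
  have hi : l.idxOf a < l.length := List.idxOf_lt_length_of_mem (mem_firstOccurrences.2 ha)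
  calc σ a = (l.map σ)[l.idxOf a]'(by simpa using hi) := by simp [List.getElem_idxOf hi]
    _ = l.idxOf a := by rw [List.getElem_of_eq hσ, List.getElem_range]

lemma lt_rank_of_mem_normalForm {w : List ℕ} {a : ℕ} (ha : a ∈ normalForm w) : a < rank w := by
  obtain ⟨b, hb, rfl⟩ := List.mem_map.1 ha
  rw [← length_firstOccurrences]
  exact List.idxOf_lt_length_of_mem (mem_firstOccurrences.2 hb)

lemma isGauss_map_iff (σ : ℕ ≃ ℕ) {w : List ℕ} : IsGauss (w.map σ) ↔ IsGauss w := by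
  simp only [IsGauss, List.forall_mem_map, List.count_map_of_injective _ _ σ.injective]

lemma IsGauss.normalForm {w : List ℕ} (hw : IsGauss w) : IsGauss (normalForm w) := by
  obtain ⟨σ, hσ⟩ := exists_equiv_map_eq_normalForm w
  exact hσ ▸ (isGauss_map_iff σ).2 hw

lemma IsGauss.length_eq {w : List ℕ} (hw : IsGauss w) : w.length = 2 * rank w := by
  rw [← List.sum_map_count_dedup_eq_length, rank, lettersOf, List.card_toFinset,
    List.map_congr_left fun a ha => hw a (List.mem_dedup.1 ha)]
  simp [mul_comm]

lemma List.mem_sections_replicate {α : Type*} {L v : List α} {k : ℕ} :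
    v ∈ (List.replicate k L).sections ↔ v.length = k ∧ ∀ a ∈ v, a ∈ L := by
  rw [List.mem_sections]
  induction v generalizing k with
  | nil => cases k <;> simp
  | cons a v ih => cases k <;> simp [List.replicate_succ, ih, and_left_comm]

/-- The class of a list in `G_n`, with the junk value `0` when it is not a Gauss word. -/
noncomputable def wordCls (n : ℕ) (w : List ℕ) : Gn n :=
  if h : IsGauss w then cls n ⟨w, h⟩ else 0

section Relations

variable {n : ℕ}

lemma mk_eq_zero_of_mem_relSet {g : FreeAbelianGroup GWgen} (hg : g ∈ relSet n) :
    (g : Gn n) = 0 :=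
  (QuotientAddGroup.eq_zero_iff g).2 (AddSubgroup.subset_closure hg)

lemma wordCls_map_equiv (σ : ℕ ≃ ℕ) (w : List ℕ) : wordCls n (w.map σ) = wordCls n w := by
  by_cases hw : IsGauss w
  · have hσw := (isGauss_map_iff σ).2 hw
    rw [wordCls, dif_pos hσw, wordCls, dif_pos hw, ← sub_eq_zero]
    exact mk_eq_zero_of_mem_relSet <| Or.inl <| Or.inl <| Or.inl <| Or.inl
      ⟨⟨_, hσw⟩, ⟨w, hw⟩, ⟨σ.symm, by simp [List.map_map]⟩, rfl⟩
  · rw [wordCls, dif_neg (mt (isGauss_map_iff σ).1 hw), wordCls, dif_neg hw]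

lemma wordCls_normalForm (w : List ℕ) : wordCls n (normalForm w) = wordCls n w := by
  obtain ⟨σ, hσ⟩ := exists_equiv_map_eq_normalForm w
  rw [← hσ, wordCls_map_equiv]

lemma wordCls_eq_zero_of_lt_rank {w : List ℕ} (h : n < rank w) : wordCls n w = 0 := by
  by_cases hw : IsGauss w
  · exact (dif_pos hw).trans (mk_eq_zero_of_mem_relSet (Or.inr ⟨⟨w, hw⟩, h, rfl⟩))
  · exact dif_neg hw

lemma wordCls_eq_zero_of_not_isChain {w : List ℕ} (h : ¬ w.IsChain (· ≠ ·)) :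
    wordCls n w = 0 := by
  by_cases hw : IsGauss w
  · obtain ⟨A, _, x, y, rfl, rfl⟩ : ∃ A B x y, w = x ++ A :: B :: y ∧ A = B := by
      simpa [List.isChain_iff_forall_rel_of_append_cons_cons] using h
    exact (dif_pos hw).trans <| mk_eq_zero_of_mem_relSet <| Or.inl <| Or.inl <| Or.inl <|
      Or.inr ⟨⟨_, hw⟩, x, y, A, by simp, rfl⟩
  · exact dif_neg hw

lemma wordCls_h2 (x y z : List ℕ) (A B : ℕ)
    (hp : IsGauss (x ++ [A, B] ++ y ++ [B, A] ++ z) := by decide)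
    (hq : IsGauss (x ++ [A] ++ y ++ [A] ++ z) := by decide)
    (hq' : IsGauss (x ++ [B] ++ y ++ [B] ++ z) := by decide) :
    wordCls n (x ++ [A, B] ++ y ++ [B, A] ++ z) + wordCls n (x ++ [A] ++ y ++ [A] ++ z) +
      wordCls n (x ++ [B] ++ y ++ [B] ++ z) = 0 := by
  rw [wordCls, dif_pos hp, wordCls, dif_pos hq, wordCls, dif_pos hq']
  exact mk_eq_zero_of_mem_relSet <| Or.inl <| Or.inl <| Or.inr
    ⟨⟨_, hp⟩, ⟨_, hq⟩, ⟨_, hq'⟩, x, y, z, A, B, rfl, rfl, rfl, rfl⟩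

lemma wordCls_h3 (x y z t : List ℕ) (A B C : ℕ)
    (hp₁ : IsGauss (x ++ [A, B] ++ y ++ [A, C] ++ z ++ [B, C] ++ t) := by decide)
    (hp₂ : IsGauss (x ++ [A, B] ++ y ++ [A] ++ z ++ [B] ++ t) := by decide)
    (hp₃ : IsGauss (x ++ [A] ++ y ++ [A, C] ++ z ++ [C] ++ t) := by decide)
    (hp₄ : IsGauss (x ++ [B] ++ y ++ [C] ++ z ++ [B, C] ++ t) := by decide)
    (hq₁ : IsGauss (x ++ [B, A] ++ y ++ [C, A] ++ z ++ [C, B] ++ t) := by decide)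
    (hq₂ : IsGauss (x ++ [B, A] ++ y ++ [A] ++ z ++ [B] ++ t) := by decide)
    (hq₃ : IsGauss (x ++ [A] ++ y ++ [C, A] ++ z ++ [C] ++ t) := by decide)
    (hq₄ : IsGauss (x ++ [B] ++ y ++ [C] ++ z ++ [C, B] ++ t) := by decide) :
    wordCls n (x ++ [A, B] ++ y ++ [A, C] ++ z ++ [B, C] ++ t) +
        wordCls n (x ++ [A, B] ++ y ++ [A] ++ z ++ [B] ++ t) +
        wordCls n (x ++ [A] ++ y ++ [A, C] ++ z ++ [C] ++ t) +
        wordCls n (x ++ [B] ++ y ++ [C] ++ z ++ [B, C] ++ t) =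
      wordCls n (x ++ [B, A] ++ y ++ [C, A] ++ z ++ [C, B] ++ t) +
        wordCls n (x ++ [B, A] ++ y ++ [A] ++ z ++ [B] ++ t) +
        wordCls n (x ++ [A] ++ y ++ [C, A] ++ z ++ [C] ++ t) +
        wordCls n (x ++ [B] ++ y ++ [C] ++ z ++ [C, B] ++ t) := by
  simp only [wordCls, dif_pos hp₁, dif_pos hp₂, dif_pos hp₃, dif_pos hp₄, dif_pos hq₁,
    dif_pos hq₂, dif_pos hq₃, dif_pos hq₄]
  rw [← sub_eq_zero, sub_add_eq_sub_sub, sub_add_eq_sub_sub, sub_add_eq_sub_sub]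
  exact mk_eq_zero_of_mem_relSet <| Or.inl <| Or.inr ⟨⟨_, hp₁⟩, ⟨_, hp₂⟩, ⟨_, hp₃⟩, ⟨_, hp₄⟩,
    ⟨_, hq₁⟩, ⟨_, hq₂⟩, ⟨_, hq₃⟩, ⟨_, hq₄⟩, x, y, z, t, A, B, C,
    rfl, rfl, rfl, rfl, rfl, rfl, rfl, rfl, rfl⟩

end Relations

/- Each relation below is an instance of H2 or H3 in which every word is replaced by its normal
form and the words of rank 4 or with a doubled letter are dropped. -/
lemma wordCls_ABCBCA : wordCls 3 [0,1,2,1,2,0] = 0 := by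
  have h := wordCls_h3 (n := 3) [3] [] [] [3] 0 1 2
  simp +singlePass only [← wordCls_normalForm] at h
  simpa (disch := decide) [normalForm, firstOccurrences, wordCls_eq_zero_of_lt_rank,
    wordCls_eq_zero_of_not_isChain] using h

lemma wordCls_ABACBC_add_self : wordCls 3 [0,1,0,2,1,2] + wordCls 3 [0,1,0,2,1,2] = 0 := by
  have h := wordCls_h2 (n := 3) [] [1] [2,1,2] 0 3
  simp +singlePass only [← wordCls_normalForm] at h
  simpa (disch := decide) [normalForm, firstOccurrences, wordCls_eq_zero_of_lt_rank] using h

lemma wordCls_ABACBC_add_ABAB : wordCls 3 [0,1,0,2,1,2] + wordCls 3 [0,1,0,1] = 0 := by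
  have h := wordCls_h3 (n := 3) [] [] [] [] 0 1 2
  simp +singlePass only [← wordCls_normalForm] at h
  simpa (disch := decide) [normalForm, firstOccurrences, wordCls_eq_zero_of_not_isChain,
    wordCls_ABCBCA] using h

lemma wordCls_ABCACB_add_ABAB_add_ABAB :
    wordCls 3 [0,1,2,0,2,1] + wordCls 3 [0,1,0,1] + wordCls 3 [0,1,0,1] = 0 := by
  have h := wordCls_h2 (n := 3) [0] [0] [] 1 2
  simp +singlePass only [← wordCls_normalForm] at h
  simpa [normalForm, firstOccurrences] using h

lemma wordCls_ABCBAC_add_ABAB_add_ABAB :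
    wordCls 3 [0,1,2,1,0,2] + wordCls 3 [0,1,0,1] + wordCls 3 [0,1,0,1] = 0 := by
  have h := wordCls_h2 (n := 3) [] [2] [2] 0 1
  simp +singlePass only [← wordCls_normalForm] at h
  simpa [normalForm, firstOccurrences] using h

lemma wordCls_ABCABC_eq_ABCACB : wordCls 3 [0,1,2,0,1,2] = wordCls 3 [0,1,2,0,2,1] := by
  have h := wordCls_h3 (n := 3) [3] [3] [] [] 0 1 2
  simp +singlePass only [← wordCls_normalForm] at h
  simpa (disch := decide) [normalForm, firstOccurrences, wordCls_eq_zero_of_lt_rank,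
    wordCls_eq_zero_of_not_isChain] using h

lemma wordCls_ABCACB_add_ABACBC_add_ABCBAC :
    wordCls 3 [0,1,2,0,2,1] + wordCls 3 [0,1,0,2,1,2] + wordCls 3 [0,1,2,1,0,2] =
      wordCls 3 [0,1,2,0,1,2] := by
  have h := wordCls_h3 (n := 3) [] [3] [3] [] 0 1 2
  simp +singlePass only [← wordCls_normalForm] at h
  simpa (disch := decide) [normalForm, firstOccurrences, wordCls_eq_zero_of_lt_rank,
    wordCls_ABCBCA] using h

def canonicalWords : List (List ℕ) :=
  [[0,1,0,1], [0,1,0,2,1,2], [0,1,2,0,1,2], [0,1,2,0,2,1], [0,1,2,1,0,2], [0,1,2,1,2,0]]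

lemma wordCls_three_eq_zero_of_mem_canonicalWords {w : List ℕ} (hw : w ∈ canonicalWords) :
    wordCls 3 w = 0 := by
  set g := wordCls 3 [0,1,0,1]
  set a := wordCls 3 [0,1,0,2,1,2]
  set b := wordCls 3 [0,1,2,0,1,2]
  set c := wordCls 3 [0,1,2,0,2,1]
  set d := wordCls 3 [0,1,2,1,0,2]
  have hg2 : (2 : ℤ) • g = 0 := by
    linear_combination (norm := module) 2 • wordCls_ABACBC_add_ABAB - wordCls_ABACBC_add_self
  have hc : c = 0 := by
    linear_combination (norm := module) wordCls_ABCACB_add_ABAB_add_ABAB - hg2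
  have hd : d = 0 := by
    linear_combination (norm := module) wordCls_ABCBAC_add_ABAB_add_ABAB - hg2
  have hb : b = 0 := wordCls_ABCABC_eq_ABCACB.trans hc
  have ha : a = 0 := by
    linear_combination (norm := module) wordCls_ABCACB_add_ABACBC_add_ABCBAC - hc - hd + hb
  have hg : g = 0 := by linear_combination (norm := module) wordCls_ABACBC_add_ABAB - ha
  simp only [canonicalWords, List.mem_cons, List.not_mem_nil, or_false] at hw
  rcases hw with rfl | rfl | rfl | rfl | rfl | rfl
  exacts [hg, ha, hb, hc, hd, wordCls_ABCBCA]

lemma eq_nil_or_not_isChain_or_normalForm_mem_canonicalWords :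
    ∀ r < 4, ∀ v ∈ (List.replicate (2 * r) (List.range r)).sections,
      IsGauss v → v = [] ∨ ¬ v.IsChain (· ≠ ·) ∨ normalForm v ∈ canonicalWords := by
  decide +kernel

lemma wordCls_three_eq_zero {w : List ℕ} (hw : w ≠ []) : wordCls 3 w = 0 := by
  by_cases hG : IsGauss w
  swap
  · exact dif_neg hG
  by_cases hr : 3 < rank w
  · exact wordCls_eq_zero_of_lt_rank hr
  have hv : normalForm w ∈ (List.replicate (2 * rank w) (List.range (rank w))).sections :=
    List.mem_sections_replicate.2 ⟨by rw [normalForm, List.length_map, hG.length_eq],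
      fun a ha => List.mem_range.2 (lt_rank_of_mem_normalForm ha)⟩
  rw [← wordCls_normalForm]
  rcases eq_nil_or_not_isChain_or_normalForm_mem_canonicalWords (rank w) (by omega) _ hv
    hG.normalForm with h | h | h
  · exact absurd (List.map_eq_nil_iff.1 h) hw
  · exact wordCls_eq_zero_of_not_isChain h
  · rw [← wordCls_normalForm]
    exact wordCls_three_eq_zero_of_mem_canonicalWords h

lemma cls_three_eq_zero {p : GWgen} (hp : p.1 ≠ []) : cls 3 p = 0 :=
  (dif_pos p.2).symm.trans (wordCls_three_eq_zero hp)

lemma isGauss_nil : IsGauss [] := fun _ h => absurd h List.not_mem_nil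

noncomputable def emptyCoeff : FreeAbelianGroup GWgen →+ ℤ :=
  lift fun p => if p.1 = [] then 1 else 0

lemma emptyCoeff_of (p : GWgen) : emptyCoeff (of p) = if p.1 = [] then 1 else 0 :=
  lift_apply_of _ _

lemma relSet_subset_ker_emptyCoeff (n : ℕ) : relSet n ⊆ emptyCoeff.ker := by
  rintro g ((((⟨p, q, ⟨σ, hσ⟩, rfl⟩ | ⟨p, x, y, A, hp, rfl⟩) |
      ⟨p, q, q', x, y, z, A, B, hp, hq, hq', rfl⟩) |
      ⟨p₁, p₂, p₃, p₄, q₁, q₂, q₃, q₄, x, y, z, t, A, B, C,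
        hp₁, hp₂, hp₃, hp₄, hq₁, hq₂, hq₃, hq₄, rfl⟩) | ⟨p, hp, rfl⟩) <;>
    simp only [SetLike.mem_coe, AddMonoidHom.mem_ker, map_add, map_sub, emptyCoeff_of]
  · simp [← hσ]
  · simp [hp]
  · simp [hp, hq, hq']
  · simp [hp₁, hp₂, hp₃, hp₄, hq₁, hq₂, hq₃, hq₄]
  · exact if_neg fun h => by simp [h, rank, lettersOf] at hp

noncomputable def Gn.toInt (n : ℕ) : Gn n →+ ℤ :=
  QuotientAddGroup.lift _ emptyCoeff
    ((AddSubgroup.closure_le _).2 (relSet_subset_ker_emptyCoeff n))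

lemma Gn.toInt_cls (n : ℕ) (p : GWgen) : Gn.toInt n (cls n p) = if p.1 = [] then 1 else 0 :=
  emptyCoeff_of p

noncomputable def Gn.addEquivInt {n : ℕ} (h : ∀ p : GWgen, p.1 ≠ [] → cls n p = 0) :
    Gn n ≃+ ℤ :=
  AddMonoidHom.toAddEquiv (Gn.toInt n) (zmultiplesHom _ (cls n ⟨[], isGauss_nil⟩))
    (by
      refine QuotientAddGroup.addMonoidHom_ext _ (lift_ext _ _ fun p => ?_)
      show (Gn.toInt n (cls n p)) • cls n ⟨[], _⟩ = cls n p
      rw [Gn.toInt_cls]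
      by_cases hp : p.1 = []
      · rw [if_pos hp, one_zsmul]
        exact congrArg (cls n) (Subtype.ext hp.symm)
      · rw [if_neg hp, zero_zsmul, h p hp])
    (AddMonoidHom.ext_int ((Gn.toInt_cls n _).trans (if_pos rfl)))

/-- for homotopy of Gauss words, `G₃ ≅ ℤ`; that is, the generators
`ABAB`, `ABACBC`, `ABCABC`, `ABCACB`, `ABCBAC`, `ABCBCA` all vanish in `G₃`. -/
theorem G3_gauss_words_iso_int :
    Nonempty (Gn 3 ≃+ ℤ) ∧
    (∀ h : IsGauss [0,1,0,1], cls 3 ⟨[0,1,0,1], h⟩ = 0) ∧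
    (∀ h : IsGauss [0,1,0,2,1,2], cls 3 ⟨[0,1,0,2,1,2], h⟩ = 0) ∧
    (∀ h : IsGauss [0,1,2,0,1,2], cls 3 ⟨[0,1,2,0,1,2], h⟩ = 0) ∧
    (∀ h : IsGauss [0,1,2,0,2,1], cls 3 ⟨[0,1,2,0,2,1], h⟩ = 0) ∧
    (∀ h : IsGauss [0,1,2,1,0,2], cls 3 ⟨[0,1,2,1,0,2], h⟩ = 0) ∧
    (∀ h : IsGauss [0,1,2,1,2,0], cls 3 ⟨[0,1,2,1,2,0], h⟩ = 0) := by
  refine ⟨⟨Gn.addEquivInt fun _ => cls_three_eq_zero⟩, ?_, ?_, ?_, ?_, ?_, ?_⟩ <;>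
    exact fun _ => cls_three_eq_zero (List.cons_ne_nil _ _)
end

section
/- The map v_4 sending a Gauss word w to the mod-2 count of subwords of w isomorphic to one of the six Gauss words ABACDCBD, ABCACDBD, ABCADBDC, ABCBDACD, ABCDBDAC, ABCDCADB is invariant under the homotopy move H1: xAAy ↔ xy. -/
attribute [local instance] Classical.propDecidable

-- The six rank-4 Gauss words (letters A,B,C,D as 0,1,2,3).
def w1 : List ℕ := [0,1,0,2,3,2,1,3]  -- ABACDCBD
def w2 : List ℕ := [0,1,2,0,2,3,1,3]  -- ABCACDBD
def w3 : List ℕ := [0,1,2,0,3,1,3,2]  -- ABCADBDC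
def w4 : List ℕ := [0,1,2,1,3,0,2,3]  -- ABCBDACD
def w5 : List ℕ := [0,1,2,3,1,3,0,2]  -- ABCDBDAC
def w6 : List ℕ := [0,1,2,3,2,0,3,1]  -- ABCDCADB

/-- `v₄(w)`: the mod-2 count of subwords of `w` isomorphic to one of `w₁,…,w₆`. -/
noncomputable def v4 (w : List ℕ) : ZMod 2 :=
  ((bracketN w1 w + bracketN w2 w + bracketN w3 w
    + bracketN w4 w + bracketN w5 w + bracketN w6 w : ℕ) : ZMod 2)

/-!
A subword containing the letter `A` of `xAAy` contains the factor `AA`, whereas none of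
`w₁, …, w₆` (nor any word isomorphic to one of them) has two equal adjacent letters. So the
subwords counted by `v₄` are exactly those avoiding `A`, and these are the same for `xAAy`
and `xy`.
-/

lemma Iso.isChain_ne {v q : List ℕ} (h : Iso v q) (hq : q.IsChain (· ≠ ·)) :
    v.IsChain (· ≠ ·) := by
  obtain ⟨σ, rfl⟩ := h
  exact ((List.isChain_map σ).mp hq).imp fun _ _ hne heq => hne (heq ▸ rfl)

lemma IsGauss.notMem_of_append_pair_append {x y : List ℕ} {A : ℕ}
    (h : IsGauss (x ++ [A, A] ++ y)) : A ∉ x ++ y := by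
  have hcount := h A (by simp)
  simp only [List.count_append, List.count_cons_self] at hcount
  rw [← List.count_eq_zero, List.count_append]
  omega

lemma lettersOf_append_pair_append (x y : List ℕ) (A : ℕ) :
    lettersOf (x ++ [A, A] ++ y) = insert A (lettersOf (x ++ y)) := by
  ext a
  simp only [lettersOf, List.mem_toFinset, Finset.mem_insert, List.mem_append, List.mem_cons]
  tauto

lemma restrict_append_pair_append_of_mem {T : Finset ℕ} {A : ℕ} (x y : List ℕ) (hA : A ∈ T) :
    restrict (x ++ [A, A] ++ y) T = restrict x T ++ [A, A] ++ restrict y T := by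
  simp [restrict, List.filter_append, hA]

lemma restrict_append_pair_append_of_notMem {T : Finset ℕ} {A : ℕ} (x y : List ℕ)
    (hA : A ∉ T) : restrict (x ++ [A, A] ++ y) T = restrict (x ++ y) T := by
  simp [restrict, List.filter_append, hA]

lemma not_iso_restrict_append_pair_append {q x y : List ℕ} {A : ℕ} {T : Finset ℕ}
    (hq : q.IsChain (· ≠ ·)) (hA : A ∈ T) : ¬ Iso (restrict (x ++ [A, A] ++ y) T) q := by
  intro hiso
  have hpair := (hiso.isChain_ne hq).infix
    ⟨restrict x T, restrict y T, (restrict_append_pair_append_of_mem x y hA).symm⟩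
  simp at hpair

lemma bracketN_append_pair_append {q x y : List ℕ} {A : ℕ} (hq : q.IsChain (· ≠ ·))
    (hA : A ∉ x ++ y) : bracketN q (x ++ [A, A] ++ y) = bracketN q (x ++ y) := by
  unfold bracketN
  congr 1
  ext T
  simp only [Finset.mem_filter, Finset.mem_powerset, lettersOf_append_pair_append]
  by_cases hAT : A ∈ T
  · have hT : ¬ T ⊆ lettersOf (x ++ y) := fun hsub => hA (List.mem_toFinset.mp (hsub hAT))
    exact iff_of_false (fun ⟨_, hiso⟩ => not_iso_restrict_append_pair_append hq hAT hiso)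
      (fun ⟨hsub, _⟩ => hT hsub)
  · rw [Finset.subset_insert_iff_of_notMem hAT, restrict_append_pair_append_of_notMem x y hAT]

/-- `v₄` is invariant under the homotopy move H1: `xAAy ↔ xy`. -/
theorem v4_invariant_H1 (x y : List ℕ) (A : ℕ)
    (h : IsGauss (x ++ [A, A] ++ y)) :
    v4 (x ++ [A, A] ++ y) = v4 (x ++ y) := by
  have hA := h.notMem_of_append_pair_append
  simp only [v4, bracketN_append_pair_append (by decide : w1.IsChain (· ≠ ·)) hA,
    bracketN_append_pair_append (by decide : w2.IsChain (· ≠ ·)) hA,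
    bracketN_append_pair_append (by decide : w3.IsChain (· ≠ ·)) hA,
    bracketN_append_pair_append (by decide : w4.IsChain (· ≠ ·)) hA,
    bracketN_append_pair_append (by decide : w5.IsChain (· ≠ ·)) hA,
    bracketN_append_pair_append (by decide : w6.IsChain (· ≠ ·)) hA]
end

section
/- The map v_4 sending a Gauss word w to the mod-2 count of subwords of w isomorphic to one of ABACDCBD, ABCACDBD, ABCADBDC, ABCBDACD, ABCDBDAC, ABCDCADB is invariant under the homotopy move H2: xAByBAz ↔ xyz. -/
attribute [local instance] Classical.propDecidable

section Aux

lemma restrict_append (u v : List ℕ) (T : Finset ℕ) :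
    restrict (u ++ v) T = restrict u T ++ restrict v T := List.filter_append _ _

lemma iso_map_iff (σ : ℕ ≃ ℕ) (l q : List ℕ) : Iso (l.map σ) q ↔ Iso l q := by
  constructor
  · rintro ⟨τ, rfl⟩
    exact ⟨σ.trans τ, by simp [List.map_map]⟩
  · rintro ⟨τ, rfl⟩
    refine ⟨σ.symm.trans τ, ?_⟩
    simp [List.map_map]

end Aux

def hasNestB : List ℕ → Bool
  | [] => false
  | [_] => false
  | (a :: b :: rest) => decide ([b,a] <:+: rest) || hasNestB (b :: rest)

lemma hasNestB_cons (c : ℕ) (l : List ℕ) (h : hasNestB l = true) :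
    hasNestB (c :: l) = true := by
  match l with
  | [] => simp [hasNestB] at h
  | e :: rest => simp [hasNestB] at h ⊢; tauto

lemma hasNestB_decomp (u : List ℕ) (a b : ℕ) (v t : List ℕ) :
    hasNestB (u ++ [a,b] ++ v ++ [b,a] ++ t) = true := by
  induction u with
  | nil =>
      have h1 : [b,a] <:+: v ++ b :: a :: t := ⟨v, t, by simp⟩
      simp [hasNestB]
      exact Or.inl h1
  | cons c u ih => exact hasNestB_cons _ _ (by simpa using ih)

lemma not_iso_of_nest (q u v t : List ℕ) (a b : ℕ) (hq : hasNestB q = false) :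
    ¬ Iso (u ++ [a,b] ++ v ++ [b,a] ++ t) q := by
  rintro ⟨σ, hσ⟩
  have h2 := hasNestB_decomp (u.map σ) (σ a) (σ b) (v.map σ) (t.map σ)
  have h3 : (u ++ [a,b] ++ v ++ [b,a] ++ t).map σ
      = (u.map σ ++ [σ a, σ b] ++ v.map σ ++ [σ b, σ a] ++ t.map σ) := by simp
  rw [hσ] at h3
  rw [← h3] at h2
  rw [h2] at hq
  cases hq

lemma bracket_H2 (q : List ℕ) (hq : hasNestB q = false)
    (x y z : List ℕ) (A B : ℕ) (h : IsGauss (x ++ [A, B] ++ y ++ [B, A] ++ z)) :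
    (bracketN q (x ++ [A, B] ++ y ++ [B, A] ++ z) : ZMod 2)
      = (bracketN q (x ++ y ++ z) : ZMod 2) := by
  classical
  set w : List ℕ := x ++ [A, B] ++ y ++ [B, A] ++ z with hw
  set w' : List ℕ := x ++ y ++ z with hw'
  have hcA := h A (by simp [hw])
  have hAB : A ≠ B := by
    rintro rfl
    simp [hw, List.count_append] at hcA
    omega
  have hcB := h B (by simp [hw])
  rw [hw] at hcA hcB
  simp [List.count_append, List.count_cons, hAB, Ne.symm hAB] at hcA hcB
  have hAx : A ∉ x := by rw [← List.count_eq_zero]; omega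
  have hAy : A ∉ y := by rw [← List.count_eq_zero]; omega
  have hAz : A ∉ z := by rw [← List.count_eq_zero]; omega
  have hBx : B ∉ x := by rw [← List.count_eq_zero]; omega
  have hBy : B ∉ y := by rw [← List.count_eq_zero]; omega
  have hBz : B ∉ z := by rw [← List.count_eq_zero]; omega
  have hrw : ∀ T : Finset ℕ, restrict w T =
      restrict x T ++ restrict [A,B] T ++ restrict y T ++ restrict [B,A] T ++ restrict z T := by
    intro T; simp only [hw, restrict_append]
  have hrw' : ∀ T : Finset ℕ, restrict w' T
      = restrict x T ++ restrict y T ++ restrict z T := by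
    intro T; simp only [hw', restrict_append]
  have hAw : A ∈ lettersOf w := by simp [lettersOf, hw]
  have hBw : B ∈ lettersOf w := by simp [lettersOf, hw]
  have hletters : ∀ c, c ∈ lettersOf w ↔ c ∈ lettersOf w' ∨ c = A ∨ c = B := by
    intro c; simp [lettersOf, hw, hw']; tauto
  have hAw' : A ∉ lettersOf w' := by simp [lettersOf, hw', hAx, hAy, hAz]
  have hBw' : B ∉ lettersOf w' := by simp [lettersOf, hw', hBx, hBy, hBz]
  have hboth : ∀ T : Finset ℕ, A ∈ T → B ∈ T → ¬ Iso (restrict w T) q := by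
    intro T h1 h2
    have e1 : restrict [A,B] T = [A,B] := by simp [restrict, h1, h2]
    have e2 : restrict [B,A] T = [B,A] := by simp [restrict, h1, h2]
    rw [hrw T, e1, e2]
    exact not_iso_of_nest q _ _ _ A B hq
  set σ : ℕ ≃ ℕ := Equiv.swap A B with hσdef
  have hσA : σ A = B := Equiv.swap_apply_left A B
  have hσB : σ B = A := Equiv.swap_apply_right A B
  have hσc : ∀ c, c ≠ A → c ≠ B → σ c = c := fun c h1 h2 =>
    Equiv.swap_apply_of_ne_of_ne h1 h2
  have hmemImg : ∀ (T : Finset ℕ) (c : ℕ), c ∈ T.image σ ↔ σ c ∈ T := by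
    intro T c
    simp only [Finset.mem_image]
    constructor
    · rintro ⟨d, hd, rfl⟩
      simpa [hσdef, Equiv.swap_apply_self] using hd
    · intro hc
      exact ⟨σ c, hc, by simp [hσdef, Equiv.swap_apply_self]⟩
  have hfix : ∀ (T : Finset ℕ) (l : List ℕ), A ∉ l → B ∉ l →
      restrict l (T.image σ) = restrict l T ∧ (restrict l T).map σ = restrict l T := by
    intro T l h1 h2
    constructor
    · apply List.filter_congr
      intro c hc
      have hc1 : c ≠ A := fun e => h1 (e ▸ hc)
      have hc2 : c ≠ B := fun e => h2 (e ▸ hc)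
      simp [hmemImg, hσc c hc1 hc2]
    · conv_rhs => rw [← List.map_id (restrict l T)]
      apply List.map_congr_left
      intro c hc
      have hc' : c ∈ l := List.mem_of_mem_filter hc
      exact hσc c (fun e => h1 (e ▸ hc')) (fun e => h2 (e ▸ hc'))
  have hswap : ∀ T : Finset ℕ, ((A ∈ T ∧ B ∉ T) ∨ (B ∈ T ∧ A ∉ T)) →
      restrict w (T.image σ) = (restrict w T).map σ := by
    intro T hT
    rw [hrw T, hrw (T.image σ)]
    rw [(hfix T x hAx hBx).1, (hfix T y hAy hBy).1, (hfix T z hAz hBz).1]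
    simp only [List.map_append]
    rw [(hfix T x hAx hBx).2, (hfix T y hAy hBy).2, (hfix T z hAz hBz).2]
    rcases hT with ⟨h1, h2⟩ | ⟨h1, h2⟩
    · have e1 : restrict [A,B] T = [A] := by simp [restrict, h1, h2]
      have e2 : restrict [B,A] T = [A] := by simp [restrict, h1, h2]
      have e3 : restrict [A,B] (T.image σ) = [B] := by
        simp [restrict, hmemImg, hσA, hσB, h1, h2]
      have e4 : restrict [B,A] (T.image σ) = [B] := by
        simp [restrict, hmemImg, hσA, hσB, h1, h2]
      rw [e1, e2, e3, e4]
      simp [hσA]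
    · have e1 : restrict [A,B] T = [B] := by simp [restrict, h1, h2]
      have e2 : restrict [B,A] T = [B] := by simp [restrict, h1, h2]
      have e3 : restrict [A,B] (T.image σ) = [A] := by
        simp [restrict, hmemImg, hσA, hσB, h1, h2]
      have e4 : restrict [B,A] (T.image σ) = [A] := by
        simp [restrict, hmemImg, hσA, hσB, h1, h2]
      rw [e1, e2, e3, e4]
      simp [hσB]
  have hiso_swap : ∀ T : Finset ℕ, ((A ∈ T ∧ B ∉ T) ∨ (B ∈ T ∧ A ∉ T)) →
      (Iso (restrict w (T.image σ)) q ↔ Iso (restrict w T) q) := by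
    intro T hT; rw [hswap T hT, iso_map_iff]
  have himg_sub : ∀ T : Finset ℕ, T ⊆ lettersOf w → T.image σ ⊆ lettersOf w := by
    intro T hT c hc
    rw [hmemImg] at hc
    have hm := hT hc
    rcases eq_or_ne c A with rfl | h1
    · exact hAw
    rcases eq_or_ne c B with rfl | h2
    · exact hBw
    · rwa [hσc c h1 h2] at hm
  have himg_inv : ∀ T : Finset ℕ, (T.image σ).image σ = T := by
    intro T; ext c
    rw [hmemImg, hmemImg]
    simp [hσdef, Equiv.swap_apply_self]
  set S : Finset (Finset ℕ) :=
    (lettersOf w).powerset.filter (fun T => Iso (restrict w T) q) with hS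
  have hrestrict_eq : ∀ T : Finset ℕ, A ∉ T → B ∉ T → restrict w T = restrict w' T := by
    intro T h1 h2
    have e1 : restrict [A,B] T = [] := by simp [restrict, h1, h2]
    have e2 : restrict [B,A] T = [] := by simp [restrict, h1, h2]
    rw [hrw T, hrw' T, e1, e2]
    simp
  have hzero : (S.filter (fun T => A ∈ T ∧ B ∈ T)).card = 0 := by
    rw [Finset.card_eq_zero, Finset.filter_eq_empty_iff]
    intro T hT hTT
    rw [hS, Finset.mem_filter] at hT
    exact hboth T hTT.1 hTT.2 hT.2
  have hc12 : (S.filter (fun T => A ∈ T ∧ B ∉ T)).card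
      = (S.filter (fun T => B ∈ T ∧ A ∉ T)).card := by
    apply Finset.card_bij' (fun T _ => T.image σ) (fun T _ => T.image σ)
    · intro T _; exact himg_inv T
    · intro T _; exact himg_inv T
    · intro T hT
      rw [Finset.mem_filter, hS, Finset.mem_filter, Finset.mem_powerset] at hT ⊢
      obtain ⟨⟨hsub, hiso⟩, h1, h2⟩ := hT
      refine ⟨⟨himg_sub T hsub, (hiso_swap T (Or.inl ⟨h1, h2⟩)).2 hiso⟩, ?_, ?_⟩
      · rw [hmemImg, hσB]; exact h1
      · rw [hmemImg, hσA]; exact h2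
    · intro T hT
      rw [Finset.mem_filter, hS, Finset.mem_filter, Finset.mem_powerset] at hT ⊢
      obtain ⟨⟨hsub, hiso⟩, h1, h2⟩ := hT
      refine ⟨⟨himg_sub T hsub, (hiso_swap T (Or.inr ⟨h1, h2⟩)).2 hiso⟩, ?_, ?_⟩
      · rw [hmemImg, hσA]; exact h1
      · rw [hmemImg, hσB]; exact h2
  have hc0 : (S.filter (fun T => A ∉ T ∧ B ∉ T))
      = (lettersOf w').powerset.filter (fun T => Iso (restrict w' T) q) := by
    ext T
    rw [Finset.mem_filter, hS, Finset.mem_filter, Finset.mem_powerset,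
      Finset.mem_filter, Finset.mem_powerset]
    constructor
    · rintro ⟨⟨hsub, hiso⟩, h1, h2⟩
      have hsub' : T ⊆ lettersOf w' := by
        intro c hc
        rcases (hletters c).1 (hsub hc) with hm | rfl | rfl
        · exact hm
        · exact absurd hc h1
        · exact absurd hc h2
      exact ⟨hsub', by rw [← hrestrict_eq T h1 h2]; exact hiso⟩
    · rintro ⟨hsub', hiso⟩
      have h1 : A ∉ T := fun hc => hAw' (hsub' hc)
      have h2 : B ∉ T := fun hc => hBw' (hsub' hc)
      exact ⟨⟨fun c hc => (hletters c).2 (Or.inl (hsub' hc)),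
        by rw [hrestrict_eq T h1 h2]; exact hiso⟩, h1, h2⟩
  have hbw : bracketN q w = S.card := rfl
  have hbw' : bracketN q w'
      = (S.filter (fun T => A ∉ T ∧ B ∉ T)).card := by rw [hc0]; rfl
  clear_value S
  have hsplit : S.card = (S.filter (fun T => A ∈ T ∧ B ∈ T)).card
      + (S.filter (fun T => A ∈ T ∧ B ∉ T)).card
      + (S.filter (fun T => B ∈ T ∧ A ∉ T)).card
      + (S.filter (fun T => A ∉ T ∧ B ∉ T)).card := by
    have e1 := Finset.card_filter_add_card_filter_not (s := S)
      (p := fun T => A ∈ T)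
    have e2 := Finset.card_filter_add_card_filter_not
      (s := S.filter (fun T => A ∈ T)) (p := fun T => B ∈ T)
    have e3 := Finset.card_filter_add_card_filter_not
      (s := S.filter (fun T => ¬ A ∈ T)) (p := fun T => B ∈ T)
    rw [Finset.filter_filter, Finset.filter_filter] at e2 e3
    have h3' : (Finset.filter (fun T => ¬ A ∈ T ∧ B ∈ T) S)
        = S.filter (fun T => B ∈ T ∧ A ∉ T) := by
      apply Finset.filter_congr; intro T _
      constructor <;> exact fun hh => ⟨hh.2, hh.1⟩
    rw [h3'] at e3
    omega
  rw [hbw, hbw', hsplit, hzero, hc12]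
  push_cast
  have hself : ((S.filter (fun T => B ∈ T ∧ A ∉ T)).card : ZMod 2)
      + ((S.filter (fun T => B ∈ T ∧ A ∉ T)).card : ZMod 2) = 0 :=
    CharTwo.add_self_eq_zero _
  linear_combination hself



/-- `v₄` is invariant under the homotopy move H2: `xAByBAz ↔ xyz`. -/
theorem v4_invariant_H2 (x y z : List ℕ) (A B : ℕ)
    (h : IsGauss (x ++ [A, B] ++ y ++ [B, A] ++ z)) :
    v4 (x ++ [A, B] ++ y ++ [B, A] ++ z) = v4 (x ++ y ++ z) := by
  unfold v4
  push_cast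
  rw [bracket_H2 w1 (by decide) x y z A B h, bracket_H2 w2 (by decide) x y z A B h,
    bracket_H2 w3 (by decide) x y z A B h, bracket_H2 w4 (by decide) x y z A B h,
    bracket_H2 w5 (by decide) x y z A B h, bracket_H2 w6 (by decide) x y z A B h]
end
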